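/- arXiv:2507.09811 — 4 statements merged into one kernel-verified Lean document; each statement's English description precedes it below -/
import Mathlib

section
/- Let V be a finite-dimensional vector space over a field F with a basis indexed by {1,…,M}, and for 1 ≤ a ≤ b ≤ M let Γ[a,b] denote the span of the basis vectors with indices in [a,b]. Let [a_1,b_1],…,[a_k,b_k],[c_1,d_1],…,[c_ℓ,d_ℓ],[c,d] be integer intervals contained in [1,M] such that (⋃_{i=1}^k [a_i,b_i]) ∩ [c,d] = ∅. Then for any subspaces X_1,…,X_k, Y_1,…,Y_ℓ, Y of a vector space W over F, one has (Σ_{i=1}^k X_i ⊗ Γ[a_i,b_i]) ∩ (Σ_{j=1}^ℓ Y_j ⊗ Γ[c_j,d_j] + Y ⊗ Γ[c,d]) = (Σ_{i=1}^k X_i ⊗ Γ[a_i,b_i]) ∩ (Σ_{j=1}^ℓ Y_j ⊗ Γ[c_j,d_j]). -/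
open TensorProduct

/-- The subspace of `M ⊗ N` spanned by elementary tensors `u ⊗ w` with `u ∈ U`, `w ∈ W`. -/
def tensorSub {F M N : Type*} [Field F] [AddCommGroup M] [Module F M]
    [AddCommGroup N] [Module F N] (U : Submodule F M) (W : Submodule F N) :
    Submodule F (M ⊗[F] N) :=
  Submodule.span F {x | ∃ u ∈ U, ∃ w ∈ W, x = u ⊗ₜ[F] w}

/-- `Γ[a,b] ⊆ F^M`: the span of the standard basis vectors `e_s` with `a ≤ s ≤ b`
(indices `1,…,M`, so `e_s` corresponds to `Pi.single ⟨s-1⟩ 1`). -/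
def Gamma (F : Type*) [Field F] (M : ℕ) (a b : ℕ) : Submodule F (Fin M → F) :=
  Submodule.span F {x | ∃ i : Fin M, a ≤ (i : ℕ) + 1 ∧ (i : ℕ) + 1 ≤ b ∧
    x = Pi.single i (1 : F)}

/-!
Let `π` be the coordinate projection of `F^M` that erases the coordinates in `[c,d]`.
Then `id ⊗ π` fixes every `X_i ⊗ Γ[a_i,b_i]` pointwise (the intervals avoid `[c,d]`),
maps each `Y_j ⊗ Γ[c_j,d_j]` into itself and kills `Y ⊗ Γ[c,d]`. So an element `x = y + z`
of the left-hand side, with `y` in the `Y'`-part and `z ∈ Y ⊗ Γ[c,d]`, equals its image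
`(id ⊗ π) y`, which lies in the `Y'`-part.
-/

def eraseCoords (R : Type*) [Semiring R] {ι : Type*} (p : ι → Prop) [DecidablePred p] :
    (ι → R) →ₗ[R] (ι → R) where
  toFun x i := if p i then 0 else x i
  map_add' x y := by funext i; split_ifs <;> simp [*]
  map_smul' r x := by funext i; split_ifs <;> simp [*]

section eraseCoords

variable {R ι : Type*} [Semiring R] [DecidableEq ι] (p : ι → Prop) [DecidablePred p]

theorem eraseCoords_single (i : ι) (r : R) :
    eraseCoords R p (Pi.single i r) = if p i then 0 else Pi.single i r := by
  funext j
  by_cases hj : j = i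
  · subst hj; split_ifs <;> simp [eraseCoords, *]
  · split_ifs <;> simp [eraseCoords, hj]

end eraseCoords

theorem Submodule.inf_sup_eq_inf_of_linearMap {R E : Type*} [Semiring R] [AddCommMonoid E]
    [Module R E] (φ : E →ₗ[R] E) {A B C : Submodule R E} (hA : A ≤ φ.eqLocus LinearMap.id)
    (hB : B ≤ B.comap φ) (hC : C ≤ LinearMap.ker φ) : A ⊓ (B ⊔ C) = A ⊓ B := by
  refine le_antisymm ?_ (inf_le_inf_left _ le_sup_left)
  rintro x ⟨hxA, hxBC⟩
  obtain ⟨y, hy, z, hz, rfl⟩ := Submodule.mem_sup.1 hxBC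
  have hfix : φ (y + z) = y + z := hA hxA
  have hφz : φ z = 0 := hC hz
  rw [map_add, hφz, add_zero] at hfix
  exact ⟨hxA, hfix ▸ hB hy⟩

section tensorSub

variable {F W N : Type*} [Field F] [AddCommGroup W] [Module F W] [AddCommGroup N] [Module F N]
  {U : Submodule F W} {V : Submodule F N} (f : N →ₗ[F] N)

theorem tensorSub_le_iff {P : Submodule F (W ⊗[F] N)} :
    tensorSub U V ≤ P ↔ ∀ u ∈ U, ∀ v ∈ V, u ⊗ₜ[F] v ∈ P := by
  simp only [tensorSub, Submodule.span_le, Set.ofPred_subset]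
  constructor
  · exact fun h u hu v hv => h _ ⟨u, hu, v, hv, rfl⟩
  · rintro h _ ⟨u, hu, v, hv, rfl⟩
    exact h u hu v hv

theorem tensorSub_le_eqLocus_lTensor (h : V ≤ f.eqLocus LinearMap.id) :
    tensorSub U V ≤ (LinearMap.lTensor W f).eqLocus LinearMap.id :=
  tensorSub_le_iff.2 fun u _ v hv => by
    simp [LinearMap.mem_eqLocus, (LinearMap.mem_eqLocus.1 (h hv) : f v = v)]

theorem tensorSub_le_ker_lTensor (h : V ≤ LinearMap.ker f) :
    tensorSub U V ≤ LinearMap.ker (LinearMap.lTensor W f) :=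
  tensorSub_le_iff.2 fun u _ v hv => by simp [LinearMap.mem_ker.1 (h hv)]

theorem tensorSub_le_comap_lTensor {V' : Submodule F N} (h : V ≤ V'.comap f) :
    tensorSub U V ≤ (tensorSub U V').comap (LinearMap.lTensor W f) :=
  tensorSub_le_iff.2 fun u hu v hv =>
    Submodule.subset_span ⟨u, hu, f v, h hv, LinearMap.lTensor_tmul W f u v⟩

end tensorSub

section Gamma

variable {F : Type*} [Field F] {M a b : ℕ} (p : Fin M → Prop) [DecidablePred p]

theorem Gamma_le_iff {P : Submodule F (Fin M → F)} :
    Gamma F M a b ≤ P ↔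
      ∀ i : Fin M, a ≤ (i : ℕ) + 1 → (i : ℕ) + 1 ≤ b → Pi.single i 1 ∈ P := by
  simp only [Gamma, Submodule.span_le, Set.ofPred_subset]
  constructor
  · exact fun h i hai hib => h _ ⟨i, hai, hib, rfl⟩
  · rintro h _ ⟨i, hai, hib, rfl⟩
    exact h i hai hib

theorem Gamma_le_eqLocus_eraseCoords
    (h : ∀ i : Fin M, a ≤ (i : ℕ) + 1 → (i : ℕ) + 1 ≤ b → ¬ p i) :
    Gamma F M a b ≤ (eraseCoords F p).eqLocus LinearMap.id :=
  Gamma_le_iff.2 fun i hai hib => by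
    simp [LinearMap.mem_eqLocus, eraseCoords_single, h i hai hib]

theorem Gamma_le_ker_eraseCoords
    (h : ∀ i : Fin M, a ≤ (i : ℕ) + 1 → (i : ℕ) + 1 ≤ b → p i) :
    Gamma F M a b ≤ LinearMap.ker (eraseCoords F p) :=
  Gamma_le_iff.2 fun i hai hib => by simp [eraseCoords_single, h i hai hib]

theorem Gamma_le_comap_eraseCoords :
    Gamma F M a b ≤ (Gamma F M a b).comap (eraseCoords F p) :=
  Gamma_le_iff.2 fun i hai hib => by
    rw [Submodule.mem_comap, eraseCoords_single]
    split_ifs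
    · exact zero_mem _
    · exact Submodule.subset_span ⟨i, hai, hib, rfl⟩

end Gamma

theorem interval_tensor_intersection_general (F : Type*) [Field F] (M : ℕ)
    (W : Type*) [AddCommGroup W] [Module F W]
    (k ℓ : ℕ) (a b : Fin k → ℕ) (c' d' : Fin ℓ → ℕ) (c d : ℕ)
    (hdisj : (⋃ i, Set.Icc (a i) (b i)) ∩ Set.Icc c d = ∅)
    (X : Fin k → Submodule F W) (Y' : Fin ℓ → Submodule F W) (Y : Submodule F W) :
    (⨆ i, tensorSub (X i) (Gamma F M (a i) (b i))) ⊓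
        ((⨆ j, tensorSub (Y' j) (Gamma F M (c' j) (d' j))) ⊔ tensorSub Y (Gamma F M c d))
      = (⨆ i, tensorSub (X i) (Gamma F M (a i) (b i))) ⊓
          (⨆ j, tensorSub (Y' j) (Gamma F M (c' j) (d' j))) := by
  let p : Fin M → Prop := fun s => (s : ℕ) + 1 ∈ Set.Icc c d
  have hdisj' (i : Fin k) (s : Fin M) (has : a i ≤ (s : ℕ) + 1) (hsb : (s : ℕ) + 1 ≤ b i) :
      ¬ p s := fun hs =>
    Set.eq_empty_iff_forall_notMem.1 hdisj _ ⟨Set.mem_iUnion.2 ⟨i, has, hsb⟩, hs⟩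
  apply Submodule.inf_sup_eq_inf_of_linearMap (LinearMap.lTensor W (eraseCoords F p))
  · exact iSup_le fun i =>
      tensorSub_le_eqLocus_lTensor _ (Gamma_le_eqLocus_eraseCoords p (hdisj' i))
  · exact iSup_le fun j => (tensorSub_le_comap_lTensor _ (Gamma_le_comap_eraseCoords p)).trans
      (Submodule.comap_mono (le_iSup (fun j => tensorSub (Y' j) (Gamma F M (c' j) (d' j))) j))
  · exact tensorSub_le_ker_lTensor _ (Gamma_le_ker_eraseCoords p fun _ hc hd => ⟨hc, hd⟩)

theorem interval_tensor_intersection (F : Type*) [Field F] (M : ℕ)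
    (W : Type*) [AddCommGroup W] [Module F W]
    (k ℓ : ℕ) (a b : Fin k → ℕ) (c' d' : Fin ℓ → ℕ) (c d : ℕ)
    (hab : ∀ i, 1 ≤ a i ∧ a i ≤ b i ∧ b i ≤ M)
    (hcd' : ∀ j, 1 ≤ c' j ∧ c' j ≤ d' j ∧ d' j ≤ M)
    (hcd : 1 ≤ c ∧ c ≤ d ∧ d ≤ M)
    (hdisj : (⋃ i, Set.Icc (a i) (b i)) ∩ Set.Icc c d = ∅)
    (X : Fin k → Submodule F W) (Y' : Fin ℓ → Submodule F W) (Y : Submodule F W) :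
    (⨆ i, tensorSub (X i) (Gamma F M (a i) (b i))) ⊓
        ((⨆ j, tensorSub (Y' j) (Gamma F M (c' j) (d' j))) ⊔ tensorSub Y (Gamma F M c d))
      = (⨆ i, tensorSub (X i) (Gamma F M (a i) (b i))) ⊓
          (⨆ j, tensorSub (Y' j) (Gamma F M (c' j) (d' j))) :=
  interval_tensor_intersection_general F M W k ℓ a b c' d' c d hdisj X Y' Y
end

section
/- Let G be a graph with a dual (n,d)-representation {X_v : v ∈ V(G)} over a field F. If A, B ⊆ V(G) are vertex sets with B a clique, A ∩ B = ∅, and every vertex of A adjacent to every vertex of B, then dim(X_A + X_B) = dim(X_A) + |B|·d, where X_S = Σ_{v∈S} X_v. -/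
/-!
Every `b ∈ B` is adjacent to all of `A ∪ (B \ {b})`, so the representation condition at `b` makes
`X_b` meet `X_A + X_{B \ {b}}` trivially. Adding the spaces `X_b` to `X_A` one at a time, each
therefore raises the dimension by exactly `d`.
-/

open Module

theorem Submodule.finrank_sup_eq_of_disjoint {K M : Type*} [DivisionRing K] [AddCommGroup M]
    [Module K M] [FiniteDimensional K M] {U W : Submodule K M} (h : Disjoint U W) :
    finrank K ↥(U ⊔ W) = finrank K U + finrank K W := by
  rw [← Submodule.finrank_sup_add_finrank_inf_eq, h.eq_bot, finrank_bot, add_zero]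

theorem finrank_sup_biSup_eq_of_disjoint {K M ι : Type*} [DivisionRing K] [AddCommGroup M]
    [Module K M] [FiniteDimensional K M] [DecidableEq ι] (W : Submodule K M)
    (X : ι → Submodule K M) (B : Finset ι)
    (hdisj : ∀ b ∈ B, Disjoint (X b) (W ⊔ ⨆ v ∈ B.erase b, X v)) :
    finrank K ↥(W ⊔ ⨆ v ∈ B, X v) = finrank K W + ∑ b ∈ B, finrank K (X b) := by
  induction B using Finset.induction_on with
  | empty =>
    rw [show ⨆ v ∈ (∅ : Finset ι), X v = ⊥ by simp, sup_bot_eq, Finset.sum_empty, add_zero]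
  | @insert b B hb ih =>
    have hdisjB : ∀ c ∈ B, Disjoint (X c) (W ⊔ ⨆ v ∈ B.erase c, X v) := fun c hc =>
      (hdisj c (Finset.mem_insert_of_mem hc)).mono_right <|
        sup_le_sup_left (biSup_mono fun v hv =>
          Finset.erase_subset_erase c (Finset.subset_insert b B) hv) W
    have hdisjb : Disjoint (X b) (W ⊔ ⨆ v ∈ B, X v) := by
      simpa only [Finset.erase_insert hb] using hdisj b (Finset.mem_insert_self b B)
    rw [Finset.iSup_insert, sup_left_comm, Submodule.finrank_sup_eq_of_disjoint hdisjb, ih hdisjB,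
      Finset.sum_insert hb]
    ring

theorem SimpleGraph.disjoint_biSup_of_subset_neighborSet {K M V : Type*} [Semiring K]
    [AddCommMonoid M] [Module K M] {G : SimpleGraph V} {X : V → Submodule K M} {v : V}
    (hrep : X v ⊓ (⨆ w ∈ G.neighborSet v, X w) = ⊥) {s : Set V} (hs : s ⊆ G.neighborSet v) :
    Disjoint (X v) (⨆ w ∈ s, X w) :=
  disjoint_iff.mpr <| le_bot_iff.mp <| hrep ▸ inf_le_inf_left _ (biSup_mono fun _ hw => hs hw)

theorem dim_sum_clique_general (F : Type*) [Field F] {V : Type*} (G : SimpleGraph V)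
    (n d : ℕ) (X : V → Submodule F (Fin n → F))
    (hdim : ∀ v, finrank F (X v) = d)
    (hrep : ∀ v, X v ⊓ (⨆ w ∈ G.neighborSet v, X w) = ⊥)
    (A B : Finset V) (hB : G.IsClique (B : Set V))
    (hadj : ∀ a ∈ A, ∀ b ∈ B, G.Adj a b) :
    finrank F ↥((⨆ v ∈ A, X v) ⊔ (⨆ v ∈ B, X v))
      = finrank F ↥(⨆ v ∈ A, X v) + B.card * d := by
  classical
  have hneighbors : ∀ b ∈ B, (↑(A ∪ B.erase b) : Set V) ⊆ G.neighborSet b := by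
    intro b hb w hw
    rcases Finset.mem_union.mp hw with ha | hw
    · exact (hadj w ha b hb).symm
    · exact hB hb (Finset.mem_of_mem_erase hw) (Finset.ne_of_mem_erase hw).symm
  have hdisj : ∀ b ∈ B, Disjoint (X b) ((⨆ v ∈ A, X v) ⊔ ⨆ v ∈ B.erase b, X v) := fun b hb => by
    rw [← Finset.iSup_union]
    exact SimpleGraph.disjoint_biSup_of_subset_neighborSet (hrep b) (hneighbors b hb)
  rw [finrank_sup_biSup_eq_of_disjoint _ X B hdisj, Finset.sum_congr rfl fun v _ => hdim v,
    Finset.sum_const, smul_eq_mul]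

theorem dim_sum_clique (F : Type*) [Field F] {V : Type*} (G : SimpleGraph V)
    (n d : ℕ) (X : V → Submodule F (Fin n → F))
    (hdim : ∀ v, finrank F (X v) = d)
    (hrep : ∀ v, X v ⊓ (⨆ w ∈ G.neighborSet v, X w) = ⊥)
    (A B : Finset V) (hB : G.IsClique (B : Set V)) (hAB : Disjoint A B)
    (hadj : ∀ a ∈ A, ∀ b ∈ B, G.Adj a b) :
    finrank F ↥((⨆ v ∈ A, X v) ⊔ (⨆ v ∈ B, X v))
      = finrank F ↥(⨆ v ∈ A, X v) + B.card * d :=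
  dim_sum_clique_general F G n d X hdim hrep A B hB hadj
end

section
/- Let {X_{(i,k)} : 1 ≤ i ≤ m, k ∈ {0,1}} ∪ {X_z} be a dual (n,d)-representation of the Mycielskian M_2(K_m) over a field F, with m ≥ 2. Then for every i, dim(X_{(i,0)} ∩ X_{(i,1)}) ≥ (m+1)d − n. -/
open Module

/-- The generalized Mycielskian `M_r(K_m)` of the complete graph `K_m`:
vertices are pairs `(i,k)` with `i ∈ Fin m`, `k ∈ Fin r`, plus an apex `z`. -/
def mycK (m r : ℕ) : SimpleGraph ((Fin m × Fin r) ⊕ Unit) :=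
  SimpleGraph.fromRel (fun x y =>
    match x, y with
    | .inl (v, i), .inl (w, j) =>
        v ≠ w ∧ (((i : ℕ) = 0 ∧ (j : ℕ) = 0) ∨ (j : ℕ) = (i : ℕ) + 1)
    | .inl (_, i), .inr _ => (i : ℕ) = r - 1
    | _, _ => False)

/-! For `k ≠ i` the vertex `(k,0)` is adjacent to `(i,0)`, `(i,1)` and to every other
`(l,0)`. Hence the `m - 1` subspaces `X_{(k,0)}`, `k ≠ i`, and `X_{(i,0)} + X_{(i,1)}` form a direct
sum inside `F^n`, so `dim (X_{(i,0)} + X_{(i,1)}) + (m - 1) d ≤ n`; Grassmann's formula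
`dim (X_{(i,0)} + X_{(i,1)}) = 2d - dim (X_{(i,0)} ∩ X_{(i,1)})` finishes the count. -/

theorem mycK_two_adj_inl_zero {m : ℕ} {k j : Fin m} (h : k ≠ j) (b : Fin 2) :
    (mycK m 2).Adj (.inl (k, 0)) (.inl (j, b)) := by
  refine ⟨by simp [h], Or.inl ⟨h, ?_⟩⟩
  fin_cases b <;> simp

namespace Submodule

variable {K V : Type*} [DivisionRing K] [AddCommGroup V] [Module K V] [FiniteDimensional K V]

theorem finrank_sup_biSup_of_disjoint {ι : Type*} [DecidableEq ι] (P : Submodule K V)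
    (Q : ι → Submodule K V) (s : Finset ι)
    (hQ : ∀ k ∈ s, Disjoint (Q k) (P ⊔ ⨆ l ∈ s.erase k, Q l)) :
    finrank K ↥(P ⊔ ⨆ k ∈ s, Q k) = finrank K P + ∑ k ∈ s, finrank K (Q k) := by
  induction s using Finset.induction_on generalizing P with
  | empty =>
    have hbot : ⨆ k ∈ (∅ : Finset ι), Q k = ⊥ := by simp
    rw [hbot, sup_bot_eq, Finset.sum_empty, add_zero]
  | @insert a t ha ih =>
    have hPa : Disjoint P (Q a) := by
      have := hQ a (Finset.mem_insert_self a t)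
      exact (this.mono_right le_sup_left).symm
    have ht : ∀ k ∈ t, Disjoint (Q k) (P ⊔ Q a ⊔ ⨆ l ∈ t.erase k, Q l) := by
      intro k hk
      have hka : k ≠ a := fun h => ha (h ▸ hk)
      have := hQ k (Finset.mem_insert_of_mem hk)
      rwa [Finset.erase_insert_of_ne hka.symm, Finset.iSup_insert, ← sup_assoc] at this
    have hPQa : finrank K ↥(P ⊔ Q a) = finrank K P + finrank K (Q a) := by
      rw [← finrank_sup_add_finrank_inf_eq, hPa.eq_bot, finrank_bot, add_zero]
    rw [Finset.iSup_insert, ← sup_assoc, ih _ ht, Finset.sum_insert ha, hPQa, add_assoc]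

end Submodule

theorem dim_inf_levels_M2_general (F : Type*) [Field F] (m n d : ℕ)
    (X : (Fin m × Fin 2) ⊕ Unit → Submodule F (Fin n → F))
    (hdim : ∀ u, finrank F (X u) = d)
    (hrep : ∀ u, X u ⊓ (⨆ w ∈ (mycK m 2).neighborSet u, X w) = ⊥) :
    ∀ i : Fin m,
      ((m : ℤ) + 1) * d - n ≤ (finrank F ↥(X (.inl (i, 0)) ⊓ X (.inl (i, 1))) : ℤ) := by
  intro i
  set P := X (.inl (i, 0)) ⊔ X (.inl (i, 1))
  set s := Finset.univ.erase i
  have hle_nbr : ∀ {u w}, (mycK m 2).Adj u w → X w ≤ ⨆ v ∈ (mycK m 2).neighborSet u, X v :=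
    fun h => le_iSup₂_of_le _ h le_rfl
  have hdisj : ∀ k ∈ s, Disjoint (X (.inl (k, 0))) (P ⊔ ⨆ l ∈ s.erase k, X (.inl (l, 0))) := by
    intro k hk
    have hki : k ≠ i := Finset.ne_of_mem_erase hk
    refine (disjoint_iff.mpr (hrep _)).mono_right (sup_le (sup_le ?_ ?_) ?_)
    · exact hle_nbr (mycK_two_adj_inl_zero hki 0)
    · exact hle_nbr (mycK_two_adj_inl_zero hki 1)
    · exact iSup₂_le fun l hl => hle_nbr (mycK_two_adj_inl_zero (Finset.ne_of_mem_erase hl).symm 0)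
  have hdirect := Submodule.finrank_sup_biSup_of_disjoint P (fun k => X (.inl (k, 0))) s hdisj
  have hambient : finrank F ↥(P ⊔ ⨆ k ∈ s, X (.inl (k, 0))) ≤ n :=
    (Submodule.finrank_le _).trans_eq (by simp)
  have hgrassmann : finrank F P + finrank F ↥(X (.inl (i, 0)) ⊓ X (.inl (i, 1))) = d + d := by
    rw [Submodule.finrank_sup_add_finrank_inf_eq, hdim, hdim]
  have hcard : (m : ℤ) = s.card + 1 := by
    have h := Finset.card_erase_add_one (Finset.mem_univ i)
    rw [Finset.card_univ, Fintype.card_fin] at h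
    exact_mod_cast h.symm
  simp only [hdim, Finset.sum_const, smul_eq_mul] at hdirect
  rw [hcard]
  linarith

theorem dim_inf_levels_M2 (F : Type*) [Field F] (m n d : ℕ) (hm : 2 ≤ m)
    (X : (Fin m × Fin 2) ⊕ Unit → Submodule F (Fin n → F))
    (hdim : ∀ u, finrank F (X u) = d)
    (hrep : ∀ u, X u ⊓ (⨆ w ∈ (mycK m 2).neighborSet u, X w) = ⊥) :
    ∀ i : Fin m,
      ((m : ℤ) + 1) * d - n ≤ (finrank F ↥(X (.inl (i, 0)) ⊓ X (.inl (i, 1))) : ℤ) :=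
  dim_inf_levels_M2_general F m n d X hdim hrep
end

section
/- If the Mycielskian M_2(K_m) of the complete graph K_m (m ≥ 2) admits a dual (n,d)-representation over a field F, then n/d ≥ m + 1/m. -/
/-!
Write `x_i = X (i,0)`, `A_i = ∑_{j ≠ i} x_j` and `Z = X z`. The clique on the vertices `(i,0)`
makes the `x_i` independent, so `dim A_i = (m-1)d`. Since `(i,1)` sees `A_i + Z`, we get
`d + dim (A_i + Z) ≤ n`, i.e. `(m+1)d ≤ n + t_i` with `t_i = dim (Z ∩ A_i)`. Independence also
gives `⋂ A_i = 0`, and codimension in `Z` is subadditive under intersection, so `∑ t_i ≤ (m-1)d`.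
Summing over `i` yields `(m² + 1)d ≤ mn`.
-/

open Module

section Independent

variable {α ι : Type*} [CompleteLattice α] [IsModularLattice α] [IsCompactlyGenerated α]
  {f : ι → α}

theorem iSupIndep.biSup_inf_biSup (hf : iSupIndep f) (s t : Set ι) :
    (⨆ i ∈ s, f i) ⊓ (⨆ i ∈ t, f i) = ⨆ i ∈ s ∩ t, f i := by
  have hsplit : ⨆ i ∈ s, f i = (⨆ i ∈ s ∩ t, f i) ⊔ ⨆ i ∈ s \ t, f i := by
    rw [← iSup_union, Set.inter_union_sdiff]
  rw [hsplit, sup_inf_assoc_of_le _ (biSup_mono fun _ h => h.2),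
    (hf.disjoint_biSup_biSup Set.disjoint_sdiff_left).eq_bot, sup_bot_eq]

theorem iSupIndep.iInf_iSup_ne_eq_bot [Fintype ι] [Nonempty ι] (hf : iSupIndep f) :
    ⨅ i, ⨆ (j) (_ : j ≠ i), f j = ⊥ := by
  classical
  suffices h : ∀ s : Finset ι, ⨅ i, ⨆ (j) (_ : j ≠ i), f j ≤ ⨆ j ∈ (↑s : Set ι)ᶜ, f j by
    simpa using h Finset.univ
  intro s
  induction s using Finset.induction_on with
  | empty =>
    obtain ⟨i⟩ := ‹Nonempty ι›
    exact (iInf_le _ i).trans (biSup_mono fun _ _ => by simp)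
  | insert a s _ ih =>
    have hcompl : (↑(insert a s) : Set ι)ᶜ = (↑s)ᶜ ∩ {a}ᶜ := by
      ext; simp [and_comm]
    rw [hcompl, ← hf.biSup_inf_biSup]
    exact le_inf ih (iInf_le _ a)

end Independent

section FiniteDimensional

variable {K V ι : Type*} [DivisionRing K] [AddCommGroup V] [Module K V]

theorem iSupIndep.finrank_biSup [FiniteDimensional K V] {X : ι → Submodule K V}
    (hX : iSupIndep X) (s : Finset ι) :
    finrank K (⨆ i ∈ s, X i : Submodule K V) = ∑ i ∈ s, finrank K (X i) := by
  classical
  induction s using Finset.induction_on with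
  | empty => simp
  | insert a s ha ih =>
    have hdisj : Disjoint (X a) (⨆ i ∈ s, X i) := hX.disjoint_biSup (by simpa using ha)
    rw [Finset.iSup_insert, Finset.sum_insert ha, ← ih, ← Submodule.finrank_sup_add_finrank_inf_eq,
      hdisj.eq_bot, finrank_bot, add_zero]

/-- Codimension inside `Z` is subadditive under intersection. -/
theorem Submodule.sum_finrank_inf_add_finrank_le [FiniteDimensional K V] (Z : Submodule K V)
    (W : ι → Submodule K V) (s : Finset ι) :
    ∑ i ∈ s, finrank K (Z ⊓ W i : Submodule K V) + finrank K Z ≤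
      s.card * finrank K Z + finrank K (Z ⊓ ⨅ i ∈ s, W i : Submodule K V) := by
  classical
  induction s using Finset.induction_on with
  | empty =>
    simpa using Submodule.finrank_mono (le_inf le_rfl (by simp) : Z ≤ Z ⊓ ⨅ i ∈ ∅, W i)
  | insert a s ha ih =>
    have hstep := Submodule.finrank_sup_add_finrank_inf_eq (Z ⊓ W a) (Z ⊓ ⨅ i ∈ s, W i)
    have hsup := Submodule.finrank_mono (sup_le (inf_le_left : Z ⊓ W a ≤ Z)
      (inf_le_left : Z ⊓ ⨅ i ∈ s, W i ≤ Z))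
    rw [← inf_inf_distrib_left] at hstep
    rw [Finset.sum_insert ha, Finset.card_insert_of_notMem ha, Finset.iInf_insert, add_one_mul]
    omega

theorem Submodule.finrank_add_finrank_add_finrank_le_of_disjoint_sup [FiniteDimensional K V]
    {Y Z A : Submodule K V} (h : Disjoint Y (Z ⊔ A)) :
    finrank K Y + finrank K Z + finrank K A ≤ finrank K V + finrank K (Z ⊓ A : Submodule K V) := by
  have hY := Submodule.finrank_add_finrank_le_of_disjoint h
  have hZA := Submodule.finrank_sup_add_finrank_inf_eq Z A
  omega

theorem iSupIndep.sum_finrank_inf_iSup_ne_add_le [FiniteDimensional K V] [Fintype ι] [Nonempty ι]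
    {x : ι → Submodule K V} (hx : iSupIndep x) (Z : Submodule K V) :
    ∑ i, finrank K (Z ⊓ ⨆ (j) (_ : j ≠ i), x j : Submodule K V) + finrank K Z ≤
      Fintype.card ι * finrank K Z := by
  have hbot : Z ⊓ ⨅ i ∈ Finset.univ, ⨆ (j) (_ : j ≠ i), x j = ⊥ := by
    simp [hx.iInf_iSup_ne_eq_bot]
  have h := Submodule.sum_finrank_inf_add_finrank_le Z (fun i => ⨆ (j) (_ : j ≠ i), x j)
    Finset.univ
  rwa [hbot, finrank_bot, add_zero, Finset.card_univ] at h

/-- The linear-algebra core: `x` plays the clique `(i,0)`, `Y i` the vertex `(i,1)`, `Z` the apex. -/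
theorem iSupIndep.sq_card_add_one_mul_le [FiniteDimensional K V] [Fintype ι] [Nonempty ι]
    {x Y : ι → Submodule K V} {Z : Submodule K V} {d : ℕ} (hx : iSupIndep x)
    (hxd : ∀ i, finrank K (x i) = d) (hYd : ∀ i, finrank K (Y i) = d) (hZd : finrank K Z = d)
    (hY : ∀ i, Disjoint (Y i) (Z ⊔ ⨆ (j) (_ : j ≠ i), x j)) :
    (Fintype.card ι ^ 2 + 1) * d ≤ Fintype.card ι * finrank K V := by
  classical
  set k := Fintype.card ι
  have hk : 0 < k := Fintype.card_pos
  have hA i : finrank K (⨆ (j) (_ : j ≠ i), x j : Submodule K V) = (k - 1) * d := by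
    have : ⨆ (j) (_ : j ≠ i), x j = ⨆ j ∈ Finset.univ.erase i, x j := by
      simp only [Finset.mem_erase, Finset.mem_univ, and_true]
    rw [this, hx.finrank_biSup]
    simp [hxd, k]
  have hrow i : (k + 1) * d ≤
      finrank K V + finrank K (Z ⊓ ⨆ (j) (_ : j ≠ i), x j : Submodule K V) := by
    have h := Submodule.finrank_add_finrank_add_finrank_le_of_disjoint_sup (hY i)
    rw [hYd, hZd, hA] at h
    have hk' : (k + 1) * d = d + d + (k - 1) * d := by
      rw [show k + 1 = k - 1 + 1 + 1 by omega]; ring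
    omega
  have hcol := hx.sum_finrank_inf_iSup_ne_add_le Z
  have hsum := Finset.sum_le_sum (s := Finset.univ) fun i _ => hrow i
  rw [hZd] at hcol
  simp only [Finset.sum_const, Finset.card_univ, Finset.sum_add_distrib, smul_eq_mul] at hsum
  nlinarith

end FiniteDimensional

section Mycielskian

variable {α : Type*} [CompleteLattice α] {m : ℕ} {X : (Fin m × Fin 2) ⊕ Unit → α}

theorem iSupIndep_mycK_two_inl_zero
    (hrep : ∀ u, X u ⊓ (⨆ w ∈ (mycK m 2).neighborSet u, X w) = ⊥) :
    iSupIndep fun i => X (.inl (i, 0)) := fun i =>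
  (disjoint_iff.2 (hrep _)).mono_right <| iSup₂_le fun j hj =>
    le_biSup X (show (mycK m 2).Adj _ _ by simp [mycK, hj, Ne.symm hj])

theorem disjoint_mycK_two_inl_one
    (hrep : ∀ u, X u ⊓ (⨆ w ∈ (mycK m 2).neighborSet u, X w) = ⊥) (i : Fin m) :
    Disjoint (X (.inl (i, 1))) (X (.inr ()) ⊔ ⨆ (j) (_ : j ≠ i), X (.inl (j, 0))) :=
  (disjoint_iff.2 (hrep _)).mono_right <| sup_le
    (le_biSup X (show (mycK m 2).Adj _ _ by simp [mycK]))
    (iSup₂_le fun j hj => le_biSup X (show (mycK m 2).Adj _ _ by simp [mycK, hj, Ne.symm hj]))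

end Mycielskian

theorem haemers_lower_bound_M2 (F : Type*) [Field F] (m n d : ℕ) (hm : 2 ≤ m)
    (hd : 0 < d)
    (X : (Fin m × Fin 2) ⊕ Unit → Submodule F (Fin n → F))
    (hdim : ∀ u, finrank F (X u) = d)
    (hrep : ∀ u, X u ⊓ (⨆ w ∈ (mycK m 2).neighborSet u, X w) = ⊥) :
    (m : ℝ) + 1 / m ≤ (n : ℝ) / d := by
  have : Nonempty (Fin m) := ⟨⟨0, by omega⟩⟩
  have key := (iSupIndep_mycK_two_inl_zero hrep).sq_card_add_one_mul_le (fun _ => hdim _)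
    (fun _ => hdim _) (hdim _) (disjoint_mycK_two_inl_one hrep)
  rw [Fintype.card_fin, Module.finrank_fin_fun] at key
  have keyR : ((m : ℝ) ^ 2 + 1) * d ≤ m * n := by exact_mod_cast key
  have hm0 : (0 : ℝ) < m := by exact_mod_cast (by omega : 0 < m)
  rw [le_div_iff₀ (by exact_mod_cast hd)]
  calc ((m : ℝ) + 1 / m) * d = (m ^ 2 + 1) * d / m := by field_simp
    _ ≤ m * n / m := by gcongr
    _ = n := by field_simp
end
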